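/- Let f(t) = e^{−g(t)} be a log-concave probability density on ℝ (g : ℝ → ℝ convex) whose associated distribution has variance 1, and let m denote its median. Then f(m) ≥ e^{−4}/2. -/

import Mathlib

/-!
By Chebyshev's inequality at most a quarter of the mass lies at distance `≥ 2` from the mean.
Half of the mass lies on each side of the median `m`, so `m` is within `2` of the mean and each of
`[m - 4, m]` and `[m, m + 4]` carries mass `≥ 1/4`. Hence the density is `≥ 1/16` at some point of
each interval, and a log-concave density is quasi-concave, so `f(m) ≥ 1/16 ≥ e⁻⁴/2`.
-/

open MeasureTheory ProbabilityTheory Set Real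

theorem measureReal_ge_le_variance_div_sq {Ω : Type*} [MeasurableSpace Ω] {μ : Measure Ω}
    [IsFiniteMeasure μ] {X : Ω → ℝ} (hX : MemLp X 2 μ) {c : ℝ} (hc : 0 < c) :
    μ.real {ω | c ≤ |X ω - μ[X]|} ≤ variance X μ / c ^ 2 := by
  have := ENNReal.toReal_mono ENNReal.ofReal_ne_top (meas_ge_le_variance_div_sq hX hc)
  rwa [ENNReal.toReal_ofReal (by have := variance_nonneg X μ; positivity)] at this

theorem quarter_le_measureReal_Icc_of_median {ν : Measure ℝ} [IsProbabilityMeasure ν]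
    (hL2 : MemLp id 2 ν) {σ : ℝ} (hσ : 0 < σ) (hvar : variance id ν ≤ σ ^ 2) {m : ℝ}
    (hm : ν.real (Iio m) = 1 / 2) :
    1 / 4 ≤ ν.real (Icc m (m + 4 * σ)) ∧ 1 / 4 ≤ ν.real (Icc (m - 4 * σ) m) := by
  set μ := ν[id]
  set T := {t : ℝ | 2 * σ ≤ |t - μ|}
  have hT : ν.real T ≤ 1 / 4 := by
    have := measureReal_ge_le_variance_div_sq hL2 (by positivity : 0 < 2 * σ)
    calc ν.real T ≤ variance id ν / (2 * σ) ^ 2 := this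
      _ ≤ σ ^ 2 / (2 * σ) ^ 2 := by gcongr
      _ = 1 / 4 := by field_simp; ring
  have hle : ∀ s ⊆ T, ν.real s ≤ 1 / 4 := fun s hs => (measureReal_mono hs).trans hT
  have mem_T_of_le {t} (h : t ≤ μ - 2 * σ) : t ∈ T := by
    simp only [T, mem_ofPred_eq]; rw [abs_sub_comm, abs_of_pos (by linarith)]; linarith
  have mem_T_of_ge {t} (h : μ + 2 * σ ≤ t) : t ∈ T := by
    simp only [T, mem_ofPred_eq]; rw [abs_of_pos (by linarith)]; linarith
  have hIci : ν.real (Ici m) = 1 / 2 := by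
    rw [← compl_Iio, probReal_compl_eq_one_sub measurableSet_Iio, hm]; norm_num
  have hmean_le_add : μ ≤ m + 2 * σ := by
    by_contra! h
    linarith [hle (Iio m) fun t ht => mem_T_of_le (by linarith [mem_Iio.1 ht])]
  have hsub_le_mean : m - 2 * σ ≤ μ := by
    by_contra! h
    linarith [hle (Ici m) fun t ht => mem_T_of_ge (by linarith [mem_Ici.1 ht])]
  constructor
  · have hsub : Ici m ⊆ Icc m (m + 4 * σ) ∪ T := fun t ht => by
      by_cases h : t ≤ m + 4 * σ
      · exact Or.inl ⟨ht, h⟩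
      · exact Or.inr (mem_T_of_ge (by linarith))
    linarith [(measureReal_mono (μ := ν) hsub).trans (measureReal_union_le _ _)]
  · have hsub : Iio m ⊆ Icc (m - 4 * σ) m ∪ T := fun t ht => by
      by_cases h : m - 4 * σ ≤ t
      · exact Or.inl ⟨h, le_of_lt ht⟩
      · exact Or.inr (mem_T_of_le (by linarith))
    linarith [(measureReal_mono (μ := ν) hsub).trans (measureReal_union_le _ _)]

section Density

variable {α : Type*} [MeasurableSpace α] {μ : Measure α} {f : α → ℝ}

theorem measureReal_withDensity_ofReal [SFinite μ] (hf : 0 ≤ᵐ[μ] f) {s : Set α}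
    (hfs : IntegrableOn f s μ) :
    (μ.withDensity fun x => ENNReal.ofReal (f x)).real s = ∫ x in s, f x ∂μ := by
  rw [measureReal_def, withDensity_apply' _ s, ← ofReal_integral_eq_lintegral_ofReal hfs
    (ae_restrict_of_ae hf), ENNReal.toReal_ofReal (integral_nonneg_of_ae (ae_restrict_of_ae hf))]

theorem isProbabilityMeasure_withDensity_ofReal (hf : 0 ≤ᵐ[μ] f) (hfi : Integrable f μ)
    (hmass : ∫ x, f x ∂μ = 1) :
    IsProbabilityMeasure (μ.withDensity fun x => ENNReal.ofReal (f x)) := by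
  constructor
  rw [withDensity_apply _ MeasurableSet.univ, setLIntegral_univ,
    ← ofReal_integral_eq_lintegral_ofReal hfi hf, hmass, ENNReal.ofReal_one]

theorem integral_withDensity_ofReal (hf : 0 ≤ᵐ[μ] f) (hfm : AEMeasurable f μ) (g : α → ℝ) :
    ∫ x, g x ∂(μ.withDensity fun x => ENNReal.ofReal (f x)) = ∫ x, f x * g x ∂μ := by
  rw [integral_withDensity_eq_integral_toReal_smul₀ hfm.ennreal_ofReal
    (ae_of_all _ fun _ => ENNReal.ofReal_lt_top)]
  refine integral_congr_ae (hf.mono fun x hx => ?_)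
  simp only [ENNReal.toReal_ofReal hx, smul_eq_mul]

theorem integrable_withDensity_ofReal_iff (hf : 0 ≤ᵐ[μ] f) (hfm : AEMeasurable f μ)
    {g : α → ℝ} :
    Integrable g (μ.withDensity fun x => ENNReal.ofReal (f x)) ↔
      Integrable (fun x => f x * g x) μ := by
  rw [integrable_withDensity_iff_integrable_smul₀' hfm.ennreal_ofReal
    (ae_of_all _ fun _ => ENNReal.ofReal_lt_top)]
  refine integrable_congr (hf.mono fun x hx => ?_)
  simp only [ENNReal.toReal_ofReal hx, smul_eq_mul]

end Density

theorem exists_mem_Icc_setIntegral_div_le {f : ℝ → ℝ} {a b : ℝ} (hab : a < b)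
    (hf : IntegrableOn f (Icc a b)) : ∃ x ∈ Icc a b, (∫ t in Icc a b, f t) / (b - a) ≤ f x := by
  have hvol : volume (Icc a b) ≠ 0 := by simp [hab]
  obtain ⟨x, hx, hle⟩ := exists_setAverage_le hvol measure_Icc_lt_top.ne hf
  refine ⟨x, hx, ?_⟩
  rwa [setAverage_eq, Real.volume_real_Icc_of_le hab.le, smul_eq_mul, inv_mul_eq_div] at hle

theorem ConvexOn.min_exp_neg_le {g : ℝ → ℝ} (hg : ConvexOn ℝ univ g) {x y z : ℝ}
    (hxy : x ≤ y) (hyz : y ≤ z) :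
    min (exp (-g x)) (exp (-g z)) ≤ exp (-g y) := by
  have hgy : g y ≤ max (g x) (g z) := hg.le_on_segment (mem_univ x) (mem_univ z)
    (by rw [segment_eq_Icc (hxy.trans hyz)]; exact ⟨hxy, hyz⟩)
  rcases le_total (g x) (g z) with h | h
  · rw [max_eq_right h] at hgy
    exact (min_le_right _ _).trans (exp_le_exp.2 (neg_le_neg hgy))
  · rw [max_eq_left h] at hgy
    exact (min_le_left _ _).trans (exp_le_exp.2 (neg_le_neg hgy))

theorem exp_neg_four_div_two_le : exp (-4) / 2 ≤ 1 / 16 := by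
  have h2 : 3 ≤ exp 2 := by linarith [add_one_le_exp 2]
  have h4 : 9 ≤ exp 4 := by
    rw [show (4 : ℝ) = 2 + 2 by norm_num, exp_add]; nlinarith
  rw [exp_neg, div_le_div_iff₀ two_pos (by norm_num), inv_mul_le_iff₀ (exp_pos 4)]
  linarith

theorem logconcave_density_lower_bound_at_median
    (g : ℝ → ℝ) (hg : ConvexOn ℝ Set.univ g)
    (hint : Integrable fun t => Real.exp (-g t))
    (hint2 : Integrable fun t => t ^ 2 * Real.exp (-g t))
    -- `e^{-g}` is a probability density
    (hmass : ∫ t, Real.exp (-g t) = 1)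
    -- with variance 1
    (hvar : (∫ t, t ^ 2 * Real.exp (-g t)) - (∫ t, t * Real.exp (-g t)) ^ 2 = 1)
    -- `m` is the median
    (m : ℝ) (hm : ∫ t in Set.Iio m, Real.exp (-g t) = 1 / 2) :
    Real.exp (-g m) ≥ Real.exp (-4) / 2 := by
  set ν := volume.withDensity fun t => ENNReal.ofReal (exp (-g t))
  have hpos : 0 ≤ᵐ[volume] fun t => exp (-g t) := ae_of_all _ fun t => (exp_pos _).le
  have hmeas := hint.aemeasurable
  have : IsProbabilityMeasure ν := isProbabilityMeasure_withDensity_ofReal hpos hint hmass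
  have hL2 : MemLp id 2 ν := (memLp_two_iff_integrable_sq aestronglyMeasurable_id).2 <|
    (integrable_withDensity_ofReal_iff hpos hmeas).2 (by simpa only [id, mul_comm] using hint2)
  have hvarν : variance id ν ≤ 1 ^ 2 := by
    rw [variance_eq_sub hL2, integral_withDensity_ofReal hpos hmeas,
      integral_withDensity_ofReal hpos hmeas]
    simp only [Pi.pow_apply, id, mul_comm (exp _)]
    linarith
  have hmν : ν.real (Iio m) = 1 / 2 := by
    rw [measureReal_withDensity_ofReal hpos hint.integrableOn, hm]
  obtain ⟨hR, hL⟩ := quarter_le_measureReal_Icc_of_median hL2 one_pos hvarν hmν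
  rw [measureReal_withDensity_ofReal hpos hint.integrableOn, mul_one] at hR hL
  obtain ⟨x, hx, hfx⟩ :=
    exists_mem_Icc_setIntegral_div_le (by linarith : m < m + 4) hint.integrableOn
  obtain ⟨y, hy, hfy⟩ :=
    exists_mem_Icc_setIntegral_div_le (by linarith : m - 4 < m) hint.integrableOn
  rw [add_sub_cancel_left] at hfx
  rw [sub_sub_cancel] at hfy
  calc exp (-4) / 2 ≤ 1 / 16 := exp_neg_four_div_two_le
    _ ≤ min (exp (-g y)) (exp (-g x)) := le_min (by linarith) (by linarith)
    _ ≤ exp (-g m) := hg.min_exp_neg_le hy.2 hx.1
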